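/- arXiv:0908.4071 — 2 statements merged into one kernel-verified Lean document; each statement's English description precedes it below -/
import Mathlib

section
/- Let M be a totally unimodular matrix representing a regular matroid, Λ = ker(M) ∩ ℤ^E its lattice of integer flows with the Euclidean inner product. A nonzero α ∈ Λ is a simple flow if and only if for all nonzero β, γ ∈ Λ with α = β + γ one has ⟨β, γ⟩ < 0. -/
/-- An integer matrix is totally unimodular if every square submatrix has
determinant in `{-1, 0, 1}`. -/
def IsTU {m n : Type*} [Fintype m] [Fintype n] (M : Matrix m n ℤ) : Prop :=
  ∀ (k : ℕ) (f : Fin k → m) (g : Fin k → n),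
    (M.submatrix f g).det ∈ ({-1, 0, 1} : Set ℤ)

/-- A set of columns of `M` is dependent if the columns are linearly dependent over `ℚ`. -/
def ColDep {m n : Type*} [Fintype m] (M : Matrix m n ℤ) (C : Set n) : Prop :=
  ¬ LinearIndependent ℚ (fun j : C => fun i => (M i j : ℚ))

/-- A circuit of the column matroid of `M` is a minimal dependent set of columns. -/
def IsCircuit {m n : Type*} [Fintype m] (M : Matrix m n ℤ) (C : Set n) : Prop :=
  ColDep M C ∧ ∀ C' ⊂ C, ¬ ColDep M C'

/-- A simple flow of `M` is a nonzero integer vector in `ker M` with entries in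
`{-1,0,1}` whose support is a circuit of the column matroid of `M`. -/
def IsSimpleFlow {m n : Type*} [Fintype m] [Fintype n] (M : Matrix m n ℤ) (α : n → ℤ) : Prop :=
  α ≠ 0 ∧ M.mulVec α = 0 ∧ (∀ e, α e = -1 ∨ α e = 0 ∨ α e = 1) ∧
    IsCircuit M {e | α e ≠ 0}

/-!
(⇒) If `α` has entries in `{-1, 0, 1}`, every coordinate of `⟨β, α - β⟩` is `≤ 0`, and a vanishing
sum forces `β` and `γ = α - β` to have disjoint supports; then the support of `β` is a proper
dependent subset of the circuit `supp α`.

(⇐) Total unimodularity makes every circuit carry a `±1` flow: normalise a kernel vector on the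
circuit, and Cramer's rule on a nonsingular square submatrix expresses its entries as quotients
of minors of `M`. Subtracting multiples of such circuit flows, by induction on the support, every
nonzero integer flow `α` admits a conformal simple flow `σ` (`σ e ≠ 0 → 0 < σ e * α e`). If `α`
is not simple, then `σ ≠ α`, and `⟨σ, α - σ⟩ ≥ 0` because `σ e * α e ≥ 1 = σ e ^ 2` on `supp σ`.
-/

open Matrix

lemma Matrix.linearCombination_col {m n R : Type*} [Fintype n] [CommSemiring R]
    (A : Matrix m n R) (l : n →₀ R) : Finsupp.linearCombination R A.col l = A *ᵥ l := by
  ext i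
  simp [Finsupp.linearCombination_apply, Finsupp.sum_fintype, mulVec, dotProduct, mul_comm]

lemma Matrix.map_intCast_mulVec_eq_zero_iff {m n : Type*} [Fintype n] {M : Matrix m n ℤ}
    {v : n → ℤ} : M.map ((↑) : ℤ → ℚ) *ᵥ ((↑) ∘ v) = 0 ↔ M *ᵥ v = 0 := by
  have hcast : ∀ i, ((M *ᵥ v) i : ℚ) = (M.map (↑) *ᵥ ((↑) ∘ v)) i :=
    RingHom.map_mulVec (Int.castRingHom ℚ) M v
  simp only [funext_iff, Pi.zero_apply, ← hcast, Int.cast_eq_zero]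

lemma Matrix.exists_submatrix_det_ne_zero {m ι K : Type*} [Fintype m] [Fintype ι] [DecidableEq ι]
    [Field K] (A : Matrix m ι K) (h : LinearIndependent K A.col) :
    ∃ f : ι → m, (A.submatrix f id).det ≠ 0 := by
  obtain ⟨κ, a, ha, hspan, hind⟩ := exists_linearIndependent' K A.row
  have : Fintype κ := Fintype.ofInjective a ha
  have hcard : Fintype.card κ = Fintype.card ι := by
    rw [linearIndependent_iff_card_eq_finrank_span.mp hind, Set.finrank, hspan,
      ← rank_eq_finrank_span_row, rank_eq_finrank_span_cols, finrank_span_eq_card h]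
  let e := Fintype.equivOfCardEq hcard
  refine ⟨a ∘ e.symm, ?_⟩
  rw [← isUnit_iff_ne_zero, ← isUnit_iff_isUnit_det, ← linearIndependent_rows_iff_isUnit]
  exact hind.comp e.symm e.symm.injective

lemma Fintype.sum_eq_add_sum_diff_singleton {n M : Type*} [Fintype n] [AddCommMonoid M]
    {C : Set n} {e₀ : n} [Fintype ↥(C \ {e₀})] (he₀ : e₀ ∈ C) {F : n → M}
    (hF : ∀ e ∉ C, F e = 0) : ∑ e, F e = F e₀ + ∑ j : ↥(C \ {e₀}), F j := by
  classical
  rw [Finset.sum_set_coe, ← Finset.sum_subset (Finset.subset_univ C.toFinset)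
    fun e _ he => hF e (by simpa using he), ← Finset.add_sum_erase _ _ (by simpa using he₀)]
  congr 2
  ext
  simp [and_comm]

def IsConformal {n : Type*} (σ α : n → ℤ) : Prop := ∀ e, σ e ≠ 0 → 0 < σ e * α e

lemma IsConformal.trans {n : Type*} {σ α β : n → ℤ} (h₁ : IsConformal σ α)
    (h₂ : IsConformal α β) : IsConformal σ β := fun e he => by
  have h1 := h₁ e he
  have h2 := h₂ e fun h => by simp [h] at h1
  nlinarith [mul_pos h1 h2, mul_self_nonneg (α e)]

lemma IsConformal.support_subset {n : Type*} {σ α : n → ℤ} (h : IsConformal σ α) :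
    {e | σ e ≠ 0} ⊆ {e | α e ≠ 0} := fun e he hα => by simpa [hα] using h e he

lemma IsConformal.sum_mul_sub_nonneg {n : Type*} [Fintype n] {σ α : n → ℤ}
    (hσ : ∀ e, σ e = -1 ∨ σ e = 0 ∨ σ e = 1) (h : IsConformal σ α) :
    0 ≤ ∑ e, σ e * (α e - σ e) := by
  refine Finset.sum_nonneg fun e _ => ?_
  have := h e
  rcases hσ e with h' | h' | h' <;> simp only [h'] at this ⊢ <;> norm_num at this ⊢ <;> linarith

lemma isConformal_sub_smul {n : Type*} {α τ : n → ℤ} {k : ℤ}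
    (hτ : ∀ e, τ e = -1 ∨ τ e = 0 ∨ τ e = 1) (hτα : {e | τ e ≠ 0} ⊆ {e | α e ≠ 0})
    (hk : 0 < k) (hkα : ∀ e, 0 < τ e * α e → k ≤ τ e * α e) : IsConformal (α - k • τ) α := by
  intro e he
  have hα : α e = 0 → τ e = 0 := fun h => by_contra fun hτe => hτα hτe h
  have hke := hkα e
  simp only [Pi.sub_apply, Pi.smul_apply, smul_eq_mul] at he ⊢
  rcases hτ e with h | h | h <;> rcases lt_trichotomy (α e) 0 with ha | ha | ha <;>
    simp_all <;> first | omega | nlinarith | exact mul_pos_of_neg_of_neg (by omega) ha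

section Flows

variable {m n : Type*} [Fintype m] [Fintype n] {M : Matrix m n ℤ}

lemma colDep_iff_exists_mulVec_eq_zero {C : Set n} :
    ColDep M C ↔ ∃ x : n → ℚ, x ≠ 0 ∧ (∀ e ∉ C, x e = 0) ∧ M.map (↑) *ᵥ x = 0 := by
  change ¬ LinearIndepOn ℚ (M.map (Int.cast : ℤ → ℚ)).col C ↔ _
  simp only [linearIndepOn_iff, Finsupp.mem_supported', linearCombination_col, not_forall]
  constructor
  · rintro ⟨l, hl, h0, hne⟩
    exact ⟨l, by simpa [DFunLike.ext_iff] using hne, hl, h0⟩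
  · rintro ⟨x, hx, hxC, h0⟩
    exact ⟨Finsupp.equivFunOnFinite.symm x, hxC, h0, by
      simpa [DFunLike.ext_iff, funext_iff] using hx⟩

lemma colDep_support {β : n → ℤ} (hβ : β ≠ 0) (h : M *ᵥ β = 0) : ColDep M {e | β e ≠ 0} :=
  colDep_iff_exists_mulVec_eq_zero.mpr ⟨(↑) ∘ β, by simpa [funext_iff] using hβ, by simp,
    map_intCast_mulVec_eq_zero_iff.mpr h⟩

lemma ColDep.exists_isCircuit_subset {S : Set n} (h : ColDep M S) : ∃ C ⊆ S, IsCircuit M C := by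
  obtain ⟨C, hCS, hC⟩ := exists_minimal_le_of_wellFoundedLT (ColDep M) S h
  exact ⟨C, hCS, hC.prop, fun C' hC' hdep => hC'.not_ge (hC.le_of_le hdep hC'.le)⟩

lemma IsSimpleFlow.neg {σ : n → ℤ} (h : IsSimpleFlow M σ) : IsSimpleFlow M (-σ) := by
  obtain ⟨h0, hker, hmem, hC⟩ := h
  refine ⟨neg_ne_zero.mpr h0, by rw [mulVec_neg, hker, neg_zero], fun e => ?_, by simpa using hC⟩
  rcases hmem e with h | h | h <;> simp [h]

lemma IsSimpleFlow.sum_mul_neg {α β γ : n → ℤ} (hα : IsSimpleFlow M α) (hβ : M *ᵥ β = 0)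
    (hβ0 : β ≠ 0) (hγ0 : γ ≠ 0) (h : α = β + γ) : ∑ e, β e * γ e < 0 := by
  have hγ : ∀ e, γ e = α e - β e := fun e => by rw [h, Pi.add_apply]; ring
  have hterm : ∀ e, β e * γ e ≤ 0 := fun e => by
    rw [hγ e]
    rcases hα.2.2.1 e with ha | ha | ha <;> rcases lt_trichotomy (β e) 0 with hb | hb | hb <;>
      rw [ha] <;> nlinarith
  refine (Finset.sum_nonpos fun e _ => hterm e).lt_of_ne fun hsum => ?_
  have hzero : ∀ e, β e = 0 ∨ γ e = 0 := fun e => mul_eq_zero.mp <|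
    (Finset.sum_eq_zero_iff_of_nonpos fun e _ => hterm e).mp hsum e (Finset.mem_univ e)
  have hsub : {e | β e ≠ 0} ⊆ {e | α e ≠ 0} := fun e he => by
    have := hγ e
    rcases hzero e with h' | h' <;> simp_all
  obtain ⟨e, he⟩ : ∃ e, γ e ≠ 0 := Function.ne_iff.mp hγ0
  have hβe : β e = 0 := (hzero e).resolve_right he
  have hss : {e | β e ≠ 0} ⊂ {e | α e ≠ 0} :=
    (Set.ssubset_iff_of_subset hsub).mpr ⟨e, by simpa [hγ e, hβe] using he, not_not.mpr hβe⟩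
  exact hα.2.2.2.2 _ hss (colDep_support hβ0 hβ)

lemma IsTU.det_submatrix_mem (hM : IsTU M) {ι : Type*} [Fintype ι] [DecidableEq ι]
    (f : ι → m) (g : ι → n) : (M.submatrix f g).det ∈ ({-1, 0, 1} : Set ℤ) := by
  have := hM _ (f ∘ (Fintype.equivFin ι).symm) (g ∘ (Fintype.equivFin ι).symm)
  rwa [← submatrix_submatrix, det_submatrix_equiv_self] at this

lemma IsTU.eq_neg_one_or_zero_or_one_of_mulVec_eq_col [DecidableEq n] (hM : IsTU M)
    {ι : Type*} [Fintype ι] [DecidableEq ι] {f : ι → m} {g : ι → n}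
    (hdet : (M.submatrix f g).det ≠ 0) {w : ι → ℚ} {e₀ : n}
    (hw : (M.submatrix f g).map (↑) *ᵥ w = fun i => (M (f i) e₀ : ℚ)) (i : ι) :
    w i = -1 ∨ w i = 0 ∨ w i = 1 := by
  set B : Matrix ι ι ℚ := (M.submatrix f g).map (↑)
  have hB : IsUnit B := by
    rw [isUnit_iff_isUnit_det, ← Int.cast_det, isUnit_iff_ne_zero, Int.cast_ne_zero]
    exact hdet
  have hcramer : B.cramer (B *ᵥ w) = B.det • w :=
    (mulVec_injective_iff_isUnit.mpr hB) (by rw [mulVec_cramer, mulVec_smul])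
  -- Cramer's rule replaces column `i` by column `e₀` of `M`: again a square submatrix of `M`.
  have hcol : B.updateCol i (fun j => (M (f j) e₀ : ℚ)) =
      (M.submatrix f (Function.update g i e₀)).map (↑) := by
    ext j k
    by_cases hk : k = i <;> simp [hk, B]
  have key := congr_fun hcramer i
  rw [hw, cramer_apply, hcol, Pi.smul_apply, smul_eq_mul, ← Int.cast_det, ← Int.cast_det] at key
  have hd := hM.det_submatrix_mem f g
  have hd' := hM.det_submatrix_mem f (Function.update g i e₀)
  simp only [Set.mem_insert_iff, Set.mem_singleton_iff] at hd hd'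
  rcases hd with h | h | h <;> rcases hd' with h' | h' | h' <;>
    simp only [h, h', Int.cast_neg, Int.cast_one, Int.cast_zero] at key hdet <;>
    first
      | exact absurd rfl hdet
      | (left; linarith)
      | (right; left; linarith)
      | (right; right; linarith)

lemma IsCircuit.exists_rat_flow (hM : IsTU M) {C : Set n} (hC : IsCircuit M C) :
    ∃ y : n → ℚ, y ≠ 0 ∧ (∀ e ∉ C, y e = 0) ∧ M.map (↑) *ᵥ y = 0 ∧
      ∀ e, y e = -1 ∨ y e = 0 ∨ y e = 1 := by
  classical
  obtain ⟨x, hx0, hxC, hx⟩ := colDep_iff_exists_mulVec_eq_zero.mp hC.1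
  obtain ⟨e₀, he₀⟩ : ∃ e, x e ≠ 0 := Function.ne_iff.mp hx0
  have he₀C : e₀ ∈ C := by_contra fun h => he₀ (hxC e₀ h)
  set y : n → ℚ := (-(x e₀)⁻¹) • x
  have hy₀ : y e₀ = -1 := by simp [y, he₀]
  have hyC : ∀ e ∉ C, y e = 0 := fun e he => by simp [y, hxC e he]
  have hy : M.map (↑) *ᵥ y = 0 := by rw [mulVec_smul, hx, smul_zero]
  set D := C \ {e₀}
  have hD : LinearIndependent ℚ ((M.map ((↑) : ℤ → ℚ)).submatrix id (Subtype.val : D → n)).col :=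
    not_not.mp (hC.2 D (Set.sdiff_singleton_ssubset.mpr he₀C))
  obtain ⟨f, hf⟩ := exists_submatrix_det_ne_zero _ hD
  have hdet : (M.submatrix f (Subtype.val : D → n)).det ≠ 0 := by
    rw [← Int.cast_ne_zero (α := ℚ), Int.cast_det]
    exact hf
  -- on the rows `f`, the flow equation for `y` is a square system on `D` with right-hand side
  -- column `e₀`
  have hw : (M.submatrix f (Subtype.val : D → n)).map (↑) *ᵥ (fun j : D => y j) =
      fun i => (M (f i) e₀ : ℚ) := by
    ext i
    have := congr_fun hy (f i)
    rw [mulVec, dotProduct,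
      Fintype.sum_eq_add_sum_diff_singleton he₀C fun e he => by simp [hyC e he]] at this
    simp only [map_apply, hy₀, Pi.zero_apply] at this
    simp only [mulVec, dotProduct, map_apply, submatrix_apply]
    linarith
  refine ⟨y, fun h => by simp [h] at hy₀, hyC, hy, fun e => ?_⟩
  by_cases heC : e ∈ C
  · by_cases he : e = e₀
    · exact .inl (he ▸ hy₀)
    · exact hM.eq_neg_one_or_zero_or_one_of_mulVec_eq_col hdet hw ⟨e, heC, he⟩
  · exact .inr (.inl (hyC e heC))

lemma IsCircuit.exists_isSimpleFlow (hM : IsTU M) {C : Set n} (hC : IsCircuit M C) :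
    ∃ σ, IsSimpleFlow M σ ∧ {e | σ e ≠ 0} = C := by
  obtain ⟨y, hy0, hyC, hy, hy_mem⟩ := hC.exists_rat_flow hM
  set σ : n → ℤ := fun e => ⌊y e⌋
  have hσy : ∀ e, (σ e : ℚ) = y e := fun e => by
    rcases hy_mem e with h | h | h <;> norm_num [σ, h]
  have hσ_mem : ∀ e, σ e = -1 ∨ σ e = 0 ∨ σ e = 1 := fun e => by
    rcases hy_mem e with h | h | h <;> norm_num [σ, h]
  have hσ0 : σ ≠ 0 := fun h => hy0 (funext fun e => by simp [← hσy e, h])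
  have hσker : M *ᵥ σ = 0 :=
    map_intCast_mulVec_eq_zero_iff.mp (by rwa [show ((↑) ∘ σ : n → ℚ) = y from funext hσy])
  have hsupp : {e | σ e ≠ 0} = C := by
    have hsub : {e | σ e ≠ 0} ⊆ C := fun e he =>
      by_contra fun h => he (by exact_mod_cast (hσy e).trans (hyC e h))
    exact hsub.eq_of_not_ssubset fun hss => hC.2 _ hss (colDep_support hσ0 hσker)
  exact ⟨σ, ⟨hσ0, hσker, hσ_mem, hsupp ▸ hC⟩, hsupp⟩

lemma exists_isSimpleFlow_pos_mul (hM : IsTU M) {α : n → ℤ} (hα : α ≠ 0) (hker : M *ᵥ α = 0) :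
    ∃ τ, IsSimpleFlow M τ ∧ {e | τ e ≠ 0} ⊆ {e | α e ≠ 0} ∧ ∃ e, 0 < τ e * α e := by
  obtain ⟨C, hCα, hC⟩ := (colDep_support hα hker).exists_isCircuit_subset
  obtain ⟨σ, hσ, hσC⟩ := hC.exists_isSimpleFlow hM
  obtain ⟨e, he⟩ : ∃ e, σ e ≠ 0 := Function.ne_iff.mp hσ.1
  have hsupp : {e | σ e ≠ 0} ⊆ {e | α e ≠ 0} := hσC ▸ hCα
  rcases (mul_ne_zero he (hsupp he)).lt_or_gt with hneg | hpos
  · exact ⟨-σ, hσ.neg, by simpa using hsupp, e, by simpa using hneg⟩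
  · exact ⟨σ, hσ, hsupp, e, hpos⟩

lemma exists_isConformal_support_ssubset {α τ : n → ℤ} (hker : M *ᵥ α = 0)
    (hτ : IsSimpleFlow M τ) (hτα : {e | τ e ≠ 0} ⊆ {e | α e ≠ 0}) {e₁ : n}
    (he₁ : 0 < τ e₁ * α e₁) (hconf : ¬ IsConformal τ α) :
    ∃ α', α' ≠ 0 ∧ M *ᵥ α' = 0 ∧ IsConformal α' α ∧ {e | α' e ≠ 0} ⊂ {e | α e ≠ 0} := by
  classical
  obtain ⟨e₂, he₂τ, he₂⟩ : ∃ e, τ e ≠ 0 ∧ τ e * α e ≤ 0 := by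
    simpa [IsConformal] using hconf
  -- `k` is the least `|α e|` over the coordinates where `τ` has the sign of `α`
  obtain ⟨e', he', hmin⟩ := Finset.exists_min_image (Finset.univ.filter fun e => 0 < τ e * α e)
    (fun e => τ e * α e) ⟨e₁, by simpa using he₁⟩
  rw [Finset.mem_filter] at he'
  set k := τ e' * α e'
  have hsq : ∀ e, τ e ≠ 0 → τ e * τ e = 1 := fun e he => by
    rcases hτ.2.2.1 e with h | h | h <;> simp_all
  have hconf' : IsConformal (α - k • τ) α :=
    isConformal_sub_smul hτ.2.2.1 hτα he'.2 fun e h => hmin e (by simpa using h)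
  refine ⟨α - k • τ, fun h0 => ?_, by rw [mulVec_sub, mulVec_smul, hker, hτ.2.1, smul_zero,
    sub_zero], hconf', (Set.ssubset_iff_of_subset hconf'.support_subset).mpr ⟨e', ?_, ?_⟩⟩
  · have h := congr_fun h0 e₂
    simp only [Pi.sub_apply, Pi.smul_apply, smul_eq_mul, Pi.zero_apply] at h
    have : τ e₂ * α e₂ = k := by linear_combination τ e₂ * h + k * hsq e₂ he₂τ
    linarith [he'.2]
  · exact fun h => by simp [k, h] at he'
  · have hτe' : τ e' ≠ 0 := fun h => by simp [k, h] at he'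
    simp only [Set.mem_ofPred_eq, Pi.sub_apply, Pi.smul_apply, smul_eq_mul, not_not, k]
    linear_combination (-α e') * hsq e' hτe'

theorem exists_isSimpleFlow_isConformal (hM : IsTU M) {α : n → ℤ} (hα : α ≠ 0)
    (hker : M *ᵥ α = 0) : ∃ σ, IsSimpleFlow M σ ∧ IsConformal σ α := by
  induction hN : {e | α e ≠ 0}.ncard using Nat.strong_induction_on generalizing α with
  | _ N ih =>
    obtain ⟨τ, hτ, hτα, e₁, he₁⟩ := exists_isSimpleFlow_pos_mul hM hα hker
    by_cases hconf : IsConformal τ α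
    · exact ⟨τ, hτ, hconf⟩
    obtain ⟨α', hα', hker', hα'α, hss⟩ :=
      exists_isConformal_support_ssubset hker hτ hτα he₁ hconf
    obtain ⟨σ, hσ, hσα'⟩ := ih _ (hN ▸ Set.ncard_lt_ncard hss) hα' hker' rfl
    exact ⟨σ, hσ, hσα'.trans hα'α⟩

end Flows

/-- Metric characterization of simple flows: a nonzero `α ∈ ker M ∩ ℤ^E` is a simple
flow iff for every decomposition `α = β + γ` into nonzero flows, `⟨β, γ⟩ < 0`. -/
theorem stmt8 {r m : ℕ} (M : Matrix (Fin r) (Fin m) ℤ) (hTU : IsTU M)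
    (α : Fin m → ℤ) (hα : α ≠ 0) (hker : M.mulVec α = 0) :
    IsSimpleFlow M α ↔
      ∀ β γ : Fin m → ℤ, M.mulVec β = 0 → M.mulVec γ = 0 → β ≠ 0 → γ ≠ 0 →
        α = β + γ → ∑ e, β e * γ e < 0 := by
  refine ⟨fun hsimple β γ hβ _ hβ0 hγ0 h => hsimple.sum_mul_neg hβ hβ0 hγ0 h, fun h => ?_⟩
  by_contra hns
  obtain ⟨σ, hσ, hσα⟩ := exists_isSimpleFlow_isConformal hTU hα hker
  have hne : α - σ ≠ 0 := sub_ne_zero.mpr fun h => hns (h ▸ hσ)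
  have hlt := h σ (α - σ) hσ.2.1 (by rw [mulVec_sub, hker, hσ.2.1, sub_zero]) hσ.1 hne
    (add_sub_cancel σ α).symm
  exact hlt.not_ge (hσα.sum_mul_sub_nonneg hσ.2.2.1)
end

section
/- Let U and Q be totally unimodular matrices (with no zero rows) such that UᵀU = QᵀQ. Then U can be obtained from Q by permuting the rows and multiplying some rows and columns by -1. -/
/-!
The entries of a totally unimodular matrix lie in `{-1, 0, 1}`, and its `2 × 2` minors force
all nonzero terms of `(Uᵀ * U) j l = ∑ a, U a j * U a l` to have the same sign. Hence, whenever
row `i` of `U` meets columns `j` and `l`, the product `U i j * U i l` is the sign of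
`(Uᵀ * U) j l`, and every row of `Q` meeting both columns carries the same product. A Helly-type
induction, in which the only obstruction would be a `3 × 3` minor of `Q` of determinant `±2`,
shows that the support of every row of `U` lies in the support of some row of `Q`, and vice versa. So a row of `U`
of largest support has the same support as some row of `Q`, and the two rows then agree up to
sign. Deleting both rows preserves the Gram matrix identity, and induction on the number of rows
builds the matching.
-/

open Finset Matrix

namespace Matrix

variable {m n α : Type*}

lemma transpose_mul_self_apply [Fintype m] [Mul α] [AddCommMonoid α] (U : Matrix m n α)
    (j l : n) : (Uᵀ * U) j l = ∑ a, U a j * U a l :=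
  rfl

lemma transpose_mul_self_apply_eq_add [Fintype m] [DecidableEq m] [Mul α] [AddCommMonoid α]
    (U : Matrix m n α) (i : m) (j l : n) :
    (Uᵀ * U) j l = U i j * U i l +
      ((U.submatrix (Subtype.val : {a // a ≠ i} → m) id)ᵀ *
        U.submatrix (Subtype.val : {a // a ≠ i} → m) id : Matrix n n α) j l := by
  simp only [transpose_mul_self_apply]
  exact Fintype.sum_eq_add_sum_subtype_ne _ i

def rowSupport [Fintype n] [Zero α] [DecidableEq α] (U : Matrix m n α) (i : m) : Finset n :=
  {j | U i j ≠ 0}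

@[simp]
lemma mem_rowSupport [Fintype n] [Zero α] [DecidableEq α] {U : Matrix m n α} {i : m} {j : n} :
    j ∈ U.rowSupport i ↔ U i j ≠ 0 := by
  simp [rowSupport]

end Matrix

namespace IsTU

variable {m m' n : Type*} [Fintype m] [Fintype m'] [Fintype n]
  {U : Matrix m n ℤ} {Q : Matrix m' n ℤ}

lemma submatrix (hU : IsTU U) {m₂ n₂ : Type*} [Fintype m₂] [Fintype n₂] (e : m₂ → m)
    (f : n₂ → n) : IsTU (U.submatrix e f) := fun k g h => by
  simpa only [submatrix_submatrix] using hU k (e ∘ g) (f ∘ h)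

lemma apply_mem (hU : IsTU U) (i : m) (j : n) : U i j ∈ ({-1, 0, 1} : Set ℤ) := by
  simpa using hU 1 (fun _ => i) (fun _ => j)

lemma isUnit_of_ne_zero (hU : IsTU U) {i : m} {j : n} (h : U i j ≠ 0) : IsUnit (U i j) := by
  have := hU.apply_mem i j
  simp only [Set.mem_insert_iff, Set.mem_singleton_iff] at this
  rw [Int.isUnit_iff]
  omega

lemma mul_self_eq_one (hU : IsTU U) {i : m} {j : n} (h : U i j ≠ 0) : U i j * U i j = 1 :=
  Int.isUnit_mul_self (hU.isUnit_of_ne_zero h)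

lemma mul_mul_mul_nonneg (hU : IsTU U) (i i' : m) (j l : n) :
    0 ≤ (U i j * U i l) * (U i' j * U i' l) := by
  have hdet := hU 2 ![i, i'] ![j, l]
  have ha := hU.apply_mem i j
  have hb := hU.apply_mem i l
  have hc := hU.apply_mem i' j
  have hd := hU.apply_mem i' l
  simp only [det_fin_two, submatrix_apply, cons_val_zero, cons_val_one, Set.mem_insert_iff,
    Set.mem_singleton_iff] at hdet ha hb hc hd
  -- a `2 × 2` minor whose diagonal products have opposite signs has determinant `±2`
  generalize U i j = a, U i l = b, U i' j = c, U i' l = d at *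
  rcases ha with rfl | rfl | rfl <;> rcases hb with rfl | rfl | rfl <;>
    rcases hc with rfl | rfl | rfl <;> rcases hd with rfl | rfl | rfl <;> omega

lemma three_cycle_mul_ne_one (hU : IsTU U) {i₁ i₂ i₃ : m} {a b c : n} (h₁ : U i₁ b = 0)
    (h₂ : U i₂ c = 0) (h₃ : U i₃ a = 0) :
    (U i₁ a * U i₁ c) * (U i₂ a * U i₂ b) * (U i₃ b * U i₃ c) ≠ 1 := by
  intro h
  have hdet := hU 3 ![i₁, i₂, i₃] ![a, b, c]
  simp only [det_fin_three, submatrix_apply, cons_val_zero, cons_val_one, cons_val_two,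
    tail_cons, head_cons, h₁, h₂, h₃, Set.mem_insert_iff, Set.mem_singleton_iff, mul_zero,
    zero_mul, sub_zero, add_zero] at hdet
  -- the minor is `x + y` with `x * y = 1`, hence `±2`
  have hx : U i₁ a * U i₂ b * U i₃ c * (U i₁ c * U i₂ a * U i₃ b) = 1 := by
    linear_combination h
  rcases Int.eq_one_or_neg_one_of_mul_eq_one' hx with ⟨h1, h2⟩ | ⟨h1, h2⟩ <;>
    rw [h1, h2] at hdet <;> norm_num at hdet

lemma mul_eq_sign_transpose_mul_self (hU : IsTU U) {i : m} {j l : n} (h : U i j * U i l ≠ 0) :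
    U i j * U i l = Int.sign ((Uᵀ * U) j l) := by
  have hunit : IsUnit (U i j * U i l) :=
    (hU.isUnit_of_ne_zero (left_ne_zero_of_mul h)).mul
      (hU.isUnit_of_ne_zero (right_ne_zero_of_mul h))
  have hpos : 0 < (U i j * U i l) * (Uᵀ * U) j l := by
    rw [transpose_mul_self_apply, mul_sum]
    exact sum_pos' (fun a _ => hU.mul_mul_mul_nonneg i a j l)
      ⟨i, mem_univ i, mul_self_pos.mpr h⟩
  rcases Int.isUnit_iff.mp hunit with h1 | h1 <;> rw [h1] at hpos ⊢
  · rw [Int.sign_eq_one_of_pos (by linarith)]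
  · rw [Int.sign_eq_neg_one_of_neg (by linarith)]

lemma exists_mul_ne_zero_of_transpose_mul_self_eq (hU : IsTU U) (hGram : Uᵀ * U = Qᵀ * Q)
    {i : m} {j l : n} (h : U i j * U i l ≠ 0) :
    ∃ k, Q k j * Q k l ≠ 0 := by
  have hG : (Qᵀ * Q) j l ≠ 0 := by
    intro h0
    rw [hU.mul_eq_sign_transpose_mul_self h, hGram, h0, Int.sign_zero] at h
    exact h rfl
  rw [transpose_mul_self_apply] at hG
  obtain ⟨k, -, hk⟩ := exists_ne_zero_of_sum_ne_zero hG
  exact ⟨k, hk⟩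

lemma mul_eq_mul_of_transpose_mul_self_eq (hU : IsTU U) (hQ : IsTU Q)
    (hGram : Uᵀ * U = Qᵀ * Q) {i : m} {k : m'} {j l : n} (hUj : U i j ≠ 0) (hUl : U i l ≠ 0)
    (hQj : Q k j ≠ 0) (hQl : Q k l ≠ 0) : U i j * U i l = Q k j * Q k l := by
  rw [hU.mul_eq_sign_transpose_mul_self (mul_ne_zero hUj hUl),
    hQ.mul_eq_sign_transpose_mul_self (mul_ne_zero hQj hQl), hGram]

lemma exists_eq_mul_of_rowSupport_eq (hU : IsTU U) (hQ : IsTU Q) (hGram : Uᵀ * U = Qᵀ * Q)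
    {i : m} {k : m'} (h : U.rowSupport i = Q.rowSupport k) {j₀ : n} (hj₀ : U i j₀ ≠ 0) :
    ∃ r, IsUnit r ∧ ∀ j, U i j = r * Q k j := by
  have hsupp : ∀ j, U i j ≠ 0 ↔ Q k j ≠ 0 := fun j => by simp only [← mem_rowSupport, h]
  refine ⟨U i j₀ * Q k j₀,
    (hU.isUnit_of_ne_zero hj₀).mul (hQ.isUnit_of_ne_zero ((hsupp j₀).mp hj₀)), fun j => ?_⟩
  by_cases hj : U i j = 0
  · have hQj : Q k j = 0 := by_contra fun hQj => (hsupp j).mpr hQj hj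
    rw [hj, hQj, mul_zero]
  · linear_combination U i j₀ * hU.mul_eq_mul_of_transpose_mul_self_eq hQ hGram hj hj₀
      ((hsupp j).mp hj) ((hsupp j₀).mp hj₀) - U i j * hU.mul_self_eq_one hj₀

section Support

variable [DecidableEq n]

lemma exists_rowSupport_superset_of_erase (hU : IsTU U) (hQ : IsTU Q)
    (hGram : Uᵀ * U = Qᵀ * Q) {i : m} {S : Finset n} (hS : S ⊆ U.rowSupport i) {b c : n}
    (hb : b ∈ S) (hc : c ∈ S) (hbc : b ≠ c) {k₁ k₂ k₃ : m'}
    (h₁ : S.erase b ⊆ Q.rowSupport k₁) (h₂ : S.erase c ⊆ Q.rowSupport k₂)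
    (h₃ : {b, c} ⊆ Q.rowSupport k₃) :
    ∃ k, S ⊆ Q.rowSupport k := by
  by_contra! hS'
  have hb₁ : Q k₁ b = 0 := by
    by_contra hb₁
    exact hS' k₁ <|
      (subset_insert_iff.mpr h₁).trans (insert_subset (mem_rowSupport.mpr hb₁) subset_rfl)
  have hc₂ : Q k₂ c = 0 := by
    by_contra hc₂
    exact hS' k₂ <|
      (subset_insert_iff.mpr h₂).trans (insert_subset (mem_rowSupport.mpr hc₂) subset_rfl)
  obtain ⟨a, ha, ha₃⟩ := not_subset.mp (hS' k₃)
  rw [mem_rowSupport, not_not] at ha₃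
  have hab : a ≠ b := by rintro rfl; simp_all [insert_subset_iff]
  have hac : a ≠ c := by rintro rfl; simp_all [insert_subset_iff]
  have hUa := mem_rowSupport.mp (hS ha)
  have hUb := mem_rowSupport.mp (hS hb)
  have hUc := mem_rowSupport.mp (hS hc)
  have hU₁ : U i a * U i c = Q k₁ a * Q k₁ c :=
    hU.mul_eq_mul_of_transpose_mul_self_eq hQ hGram hUa hUc
      (mem_rowSupport.mp (h₁ (mem_erase.mpr ⟨hab, ha⟩)))
      (mem_rowSupport.mp (h₁ (mem_erase.mpr ⟨hbc.symm, hc⟩)))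
  have hU₂ : U i a * U i b = Q k₂ a * Q k₂ b :=
    hU.mul_eq_mul_of_transpose_mul_self_eq hQ hGram hUa hUb
      (mem_rowSupport.mp (h₂ (mem_erase.mpr ⟨hac, ha⟩)))
      (mem_rowSupport.mp (h₂ (mem_erase.mpr ⟨hbc, hb⟩)))
  have hU₃ : U i b * U i c = Q k₃ b * Q k₃ c :=
    hU.mul_eq_mul_of_transpose_mul_self_eq hQ hGram hUb hUc
      (mem_rowSupport.mp (h₃ (by simp))) (mem_rowSupport.mp (h₃ (by simp)))
  refine hQ.three_cycle_mul_ne_one hb₁ hc₂ ha₃ ?_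
  rw [← hU₁, ← hU₂, ← hU₃]
  linear_combination (U i b * U i b) * (U i c * U i c) * hU.mul_self_eq_one hUa
    + (U i c * U i c) * hU.mul_self_eq_one hUb + hU.mul_self_eq_one hUc

lemma exists_rowSupport_superset (hU : IsTU U) (hQ : IsTU Q) (hGram : Uᵀ * U = Qᵀ * Q)
    (i : m) : ∀ S ⊆ U.rowSupport i, S.Nonempty → ∃ k, S ⊆ Q.rowSupport k := by
  intro S
  induction S using Finset.strongInduction with
  | H S ih =>
  intro hS hne
  by_cases hcard : 2 < #S
  · obtain ⟨a, b, c, ha, hb, hc, hab, hac, hbc⟩ := two_lt_card_iff.mp hcard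
    obtain ⟨k₁, h₁⟩ := ih (S.erase b) (erase_ssubset hb) ((erase_subset b S).trans hS)
      ⟨a, mem_erase.mpr ⟨hab, ha⟩⟩
    obtain ⟨k₂, h₂⟩ := ih (S.erase c) (erase_ssubset hc) ((erase_subset c S).trans hS)
      ⟨a, mem_erase.mpr ⟨hac, ha⟩⟩
    have hbcS : {b, c} ⊂ S := by
      refine Finset.ssubset_iff_subset_ne.mpr
        ⟨insert_subset hb (singleton_subset_iff.mpr hc), ?_⟩
      rintro rfl
      simp [hab, hac] at ha
    obtain ⟨k₃, h₃⟩ := ih {b, c} hbcS (hbcS.subset.trans hS) (insert_nonempty b {c})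
    exact hU.exists_rowSupport_superset_of_erase hQ hGram hS hb hc hbc h₁ h₂ h₃
  · obtain ⟨b, c, rfl⟩ : ∃ b c, S = {b, c} := by
      rcases (by have := hne.card_pos; omega : #S = 1 ∨ #S = 2) with h | h
      · obtain ⟨b, rfl⟩ := card_eq_one.mp h
        exact ⟨b, b, by simp⟩
      · obtain ⟨b, c, -, rfl⟩ := card_eq_two.mp h
        exact ⟨b, c, rfl⟩
    rw [insert_subset_iff, singleton_subset_iff, mem_rowSupport, mem_rowSupport] at hS
    obtain ⟨k, hk⟩ :=
      hU.exists_mul_ne_zero_of_transpose_mul_self_eq hGram (mul_ne_zero hS.1 hS.2)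
    refine ⟨k, ?_⟩
    rw [insert_subset_iff, singleton_subset_iff, mem_rowSupport, mem_rowSupport]
    exact ⟨left_ne_zero_of_mul hk, right_ne_zero_of_mul hk⟩

lemma exists_rowSupport_eq [Nonempty m] (hU : IsTU U) (hQ : IsTU Q)
    (hGram : Uᵀ * U = Qᵀ * Q) (hUrows : ∀ i, ∃ j, U i j ≠ 0) :
    ∃ i k, U.rowSupport i = Q.rowSupport k := by
  obtain ⟨i, -, hmax⟩ := exists_max_image univ (fun i => #(U.rowSupport i)) univ_nonempty
  obtain ⟨j, hj⟩ := hUrows i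
  have hne : (U.rowSupport i).Nonempty := ⟨j, mem_rowSupport.mpr hj⟩
  obtain ⟨k, hik⟩ := hU.exists_rowSupport_superset hQ hGram i _ subset_rfl hne
  obtain ⟨i', hki'⟩ := hQ.exists_rowSupport_superset hU hGram.symm k _ subset_rfl (hne.mono hik)
  exact ⟨i, k, eq_of_subset_of_card_le hik ((card_le_card hki').trans (hmax i' (mem_univ _)))⟩

end Support

end IsTU

theorem exists_equiv_eq_mul_of_transpose_mul_self_eq {m m' n : Type*} [Fintype m] [Fintype m']
    [Fintype n] [DecidableEq n] {U : Matrix m n ℤ} {Q : Matrix m' n ℤ} (hU : IsTU U)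
    (hQ : IsTU Q) (hUrows : ∀ i, ∃ j, U i j ≠ 0) (hQrows : ∀ k, ∃ j, Q k j ≠ 0)
    (hGram : Uᵀ * U = Qᵀ * Q) :
    ∃ (σ : m ≃ m') (r : m → ℤ), (∀ i, IsUnit (r i)) ∧
      ∀ i j, U i j = r i * Q (σ i) j := by
  classical
  induction hcard : Fintype.card m generalizing m m' with
  | zero =>
    have : IsEmpty m := Fintype.card_eq_zero_iff.mp hcard
    have : IsEmpty m' := by
      refine ⟨fun k => ?_⟩
      obtain ⟨j, hj⟩ := hQrows k
      have h := hQ.mul_eq_sign_transpose_mul_self (mul_ne_zero hj hj)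
      rw [← hGram, transpose_mul_self_apply, Fintype.sum_empty, Int.sign_zero] at h
      exact mul_ne_zero hj hj h
    exact ⟨Equiv.equivOfIsEmpty m m', isEmptyElim, isEmptyElim, isEmptyElim⟩
  | succ N ih =>
    have : Nonempty m := Fintype.card_pos_iff.mp (by omega)
    obtain ⟨i, k, hik⟩ := hU.exists_rowSupport_eq hQ hGram hUrows
    obtain ⟨j₀, hj₀⟩ := hUrows i
    obtain ⟨r₀, hr₀, hrow⟩ := hU.exists_eq_mul_of_rowSupport_eq hQ hGram hik hj₀
    set U' : Matrix {a // a ≠ i} n ℤ := U.submatrix Subtype.val id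
    set Q' : Matrix {a // a ≠ k} n ℤ := Q.submatrix Subtype.val id
    have hGram' : U'ᵀ * U' = Q'ᵀ * Q' := by
      ext j l
      have h := congrFun₂ hGram j l
      rw [transpose_mul_self_apply_eq_add U i, transpose_mul_self_apply_eq_add Q k,
        hrow j, hrow l, mul_mul_mul_comm, Int.isUnit_mul_self hr₀, one_mul] at h
      exact add_left_cancel h
    have hcard' : Fintype.card {a // a ≠ i} = N := by
      have := Fintype.card_congr (Equiv.optionSubtypeNe i)
      rw [Fintype.card_option] at this
      omega
    obtain ⟨σ, r, hr, hσ⟩ := ih (U := U') (Q := Q') (hU.submatrix _ _) (hQ.submatrix _ _)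
      (fun a => hUrows a.1) (fun a => hQrows a.1) hGram' hcard'
    refine ⟨(Equiv.optionSubtypeNe i).symm.trans (σ.optionCongr.trans (Equiv.optionSubtypeNe k)),
      fun a => if h : a = i then r₀ else r ⟨a, h⟩, fun a => ?_, fun a j => ?_⟩
    · by_cases h : a = i <;> simp [h, hr₀, hr]
    · by_cases h : a = i
      · subst h; simp [hrow]
      · simpa [U', Q', h, Equiv.optionSubtypeNe_symm_of_ne h] using hσ ⟨a, h⟩ j

/-- If `U` and `Q` are TU matrices with no zero rows and equal Gram matrices
`UᵀU = QᵀQ`, then `U` is obtained from `Q` by permuting rows and multiplying some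
rows and columns by `-1`. -/
theorem stmt15 {m m' s : ℕ}
    (U : Matrix (Fin m) (Fin s) ℤ) (hUTU : IsTU U)
    (Q : Matrix (Fin m') (Fin s) ℤ) (hQTU : IsTU Q)
    (hUrows : ∀ i, ∃ j, U i j ≠ 0) (hQrows : ∀ i, ∃ j, Q i j ≠ 0)
    (hGram : U.transpose * U = Q.transpose * Q) :
    ∃ (σ : Fin m ≃ Fin m') (r : Fin m → ℤ) (c : Fin s → ℤ),
      (∀ i, r i = 1 ∨ r i = -1) ∧ (∀ j, c j = 1 ∨ c j = -1) ∧
      ∀ i j, U i j = r i * c j * Q (σ i) j := by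
  obtain ⟨σ, r, hr, hrow⟩ :=
    exists_equiv_eq_mul_of_transpose_mul_self_eq hUTU hQTU hUrows hQrows hGram
  refine ⟨σ, r, 1, fun i => Int.isUnit_iff.mp (hr i), fun _ => Or.inl rfl, fun i j => ?_⟩
  rw [hrow i j, Pi.one_apply, mul_one]
end
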